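/- Let q > 0 and let S be a densely defined closable operator in a complex Hilbert space H such that S satisfies (O_{q,w}) and dom S̄ = dom S*. Then for every f ∈ ker S* and every n ∈ ℕ: S̄^n f is well defined and belongs to dom S̄ ∩ dom S*; S* S̄^n f = [n]_q S̄^{n−1} f (with the convention S̄^{−1} f := 0); and ⟨S̄^m f, S̄^n f⟩ = 0 whenever m ≠ n. -/

import Mathlib

noncomputable section

variable {H : Type*} [NormedAddCommGroup H] [InnerProductSpace ℂ H] [CompleteSpace H]

/-- The `q`-number `[n]_q`. -/
def qNum (q : ℝ) (n : ℕ) : ℝ := if q = 1 then (n : ℝ) else (1 - q ^ n) / (1 - q)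

/-- `S` satisfies the weak commutation relation `(O_{q,w})`:
`⟨S f, S g⟩ - q ⟨S* f, S* g⟩ = ⟨f, g⟩` for all `f, g ∈ dom S ∩ dom S*`. -/
def SatOqW (q : ℝ) (S : H →ₗ.[ℂ] H) : Prop :=
  ∀ f g (hf : f ∈ S.domain) (hf' : f ∈ S.adjoint.domain)
    (hg : g ∈ S.domain) (hg' : g ∈ S.adjoint.domain),
    (inner ℂ (S ⟨f, hf⟩) (S ⟨g, hg⟩) : ℂ)
      - (q : ℂ) * inner ℂ (S.adjoint ⟨f, hf'⟩) (S.adjoint ⟨g, hg'⟩) = inner ℂ f g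

open Filter Topology

set_option linter.unusedSectionVars false

/-- Approximating sequence for elements of the closure's domain. -/
theorem approx_seq (S : H →ₗ.[ℂ] H) (hclos : S.IsClosable) {x : H} (hx : x ∈ S.closure.domain) :
    ∃ v : ℕ → S.domain, Tendsto (fun k => ((v k : H))) atTop (𝓝 x) ∧
      Tendsto (fun k => S (v k)) atTop (𝓝 (S.closure ⟨x, hx⟩)) := by
  have hmem : ((x, S.closure ⟨x, hx⟩) : H × H) ∈ S.closure.graph := S.closure.mem_graph ⟨x, hx⟩
  rw [← hclos.graph_closure_eq_closure_graph] at hmem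
  have hmem' : ((x, S.closure ⟨x, hx⟩) : H × H) ∈ closure (S.graph : Set (H × H)) := by
    rw [← Submodule.topologicalClosure_coe]; exact hmem
  obtain ⟨p, hp, hlim⟩ := mem_closure_iff_seq_limit.1 hmem'
  choose y hy using fun k => S.mem_graph_iff'.1 (hp k)
  refine ⟨y, ?_, ?_⟩
  · have h1 : Tendsto (fun k => (p k).1) atTop (𝓝 x) :=
      (continuous_fst.tendsto _).comp hlim
    convert h1 using 2 with k
    rw [← hy k]
  · have h2 : Tendsto (fun k => (p k).2) atTop (𝓝 (S.closure ⟨x, hx⟩)) :=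
      (continuous_snd.tendsto _).comp hlim
    convert h2 using 2 with k
    rw [← hy k]

local notation "⟪" x ", " y "⟫" => @inner ℂ _ _ x y

/-- Fact A: `⟪u, S̄ x⟫ = ⟪S* u, x⟫` for `u ∈ dom S*`, `x ∈ dom S̄`. -/
theorem factA (S : H →ₗ.[ℂ] H) (hdense : Dense (S.domain : Set H)) (hclos : S.IsClosable)
    {u : H} (hu : u ∈ S.adjoint.domain) {x : H} (hx : x ∈ S.closure.domain) :
    ⟪u, (S.closure ⟨x, hx⟩ : H)⟫ = ⟪(S.adjoint ⟨u, hu⟩ : H), x⟫ := by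
  obtain ⟨v, hv1, hv2⟩ := approx_seq S hclos hx
  have key : ∀ k, ⟪(S.adjoint ⟨u, hu⟩ : H), ((v k : H))⟫ = ⟪u, (S (v k) : H)⟫ :=
    fun k => (S.adjoint_isFormalAdjoint hdense) ⟨u, hu⟩ (v k)
  have t1 : Filter.Tendsto (fun k => ⟪(S.adjoint ⟨u, hu⟩ : H), ((v k : H))⟫) Filter.atTop
      (nhds ⟪(S.adjoint ⟨u, hu⟩ : H), x⟫) := Filter.Tendsto.inner tendsto_const_nhds hv1
  have t2 : Filter.Tendsto (fun k => ⟪u, (S (v k) : H)⟫) Filter.atTop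
      (nhds ⟪u, (S.closure ⟨x, hx⟩ : H)⟫) := Filter.Tendsto.inner tendsto_const_nhds hv2
  exact (tendsto_nhds_unique (t1.congr key) t2).symm

theorem normBound {q : ℝ} (hq : 0 < q) {S : H →ₗ.[ℂ] H} (hw : SatOqW q S)
    {d : H} (hd : d ∈ S.domain) (hd' : d ∈ S.adjoint.domain) :
    Real.sqrt q * ‖(S.adjoint ⟨d, hd'⟩ : H)‖ ≤ ‖(S ⟨d, hd⟩ : H)‖ := by
  have h := hw d d hd hd' hd hd'
  rw [inner_self_eq_norm_sq_to_K, inner_self_eq_norm_sq_to_K, inner_self_eq_norm_sq_to_K] at h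
  have hre : ‖(S ⟨d, hd⟩ : H)‖ ^ 2 - q * ‖(S.adjoint ⟨d, hd'⟩ : H)‖ ^ 2 = ‖d‖ ^ 2 := by
    have h' : ((‖(S ⟨d, hd⟩ : H)‖ : ℝ) : ℂ) ^ 2
        - (q : ℂ) * ((‖(S.adjoint ⟨d, hd'⟩ : H)‖ : ℝ) : ℂ) ^ 2
        = ((‖d‖ : ℝ) : ℂ) ^ 2 := h
    exact_mod_cast h'
  have h2 : q * ‖(S.adjoint ⟨d, hd'⟩ : H)‖ ^ 2 ≤ ‖(S ⟨d, hd⟩ : H)‖ ^ 2 := by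
    nlinarith [sq_nonneg ‖d‖]
  have h3 := Real.sqrt_le_sqrt h2
  rwa [Real.sqrt_mul hq.le, Real.sqrt_sq (norm_nonneg _), Real.sqrt_sq (norm_nonneg _)] at h3


/-- Fact B: the relation extends to `x ∈ dom S̄`. -/
theorem factB {q : ℝ} (hq : 0 < q) {S : H →ₗ.[ℂ] H} (hdense : Dense (S.domain : Set H))
    (hclos : S.IsClosable) (hw : SatOqW q S)
    (hdomeq : S.closure.domain = S.adjoint.domain)
    {u : H} (hu : u ∈ S.domain) (hu' : u ∈ S.adjoint.domain)
    {x : H} (hx : x ∈ S.closure.domain) (hx' : x ∈ S.adjoint.domain) :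
    ⟪(S ⟨u, hu⟩ : H), (S.closure ⟨x, hx⟩ : H)⟫
      = ⟪u, x⟫ + (q : ℂ) * ⟪(S.adjoint ⟨u, hu'⟩ : H), (S.adjoint ⟨x, hx'⟩ : H)⟫ := by
  obtain ⟨v, hv1, hv2⟩ := approx_seq S hclos hx
  have hSA : ∀ y : S.domain, (y : H) ∈ S.adjoint.domain := fun y =>
    hdomeq ▸ (S.le_closure.1 y.2)
  set w : ℕ → H := fun k => S.adjoint ⟨(v k : H), hSA (v k)⟩ with hw_def
  -- w is Cauchy
  have hwC : CauchySeq w := by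
    have hSC : CauchySeq (fun k => (S (v k) : H)) := hv2.cauchySeq
    rw [Metric.cauchySeq_iff] at hSC ⊢
    intro ε hε
    obtain ⟨N, hN⟩ := hSC (Real.sqrt q * ε) (by positivity)
    refine ⟨N, fun m hm n hn => ?_⟩
    have key : ∀ (a b : S.domain),
        dist (S.adjoint ⟨(a : H), hSA a⟩ : H) (S.adjoint ⟨(b : H), hSA b⟩ : H)
          ≤ Real.sqrt q⁻¹ * dist (S a : H) (S b : H) := by
      intro a b
      have hsub : (S.adjoint ⟨(a : H), hSA a⟩ : H) - (S.adjoint ⟨(b : H), hSA b⟩ : H)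
          = S.adjoint ⟨(a : H) - (b : H), sub_mem (hSA a) (hSA b)⟩ := by
        rw [← S.adjoint.map_sub]; congr 1
      have hsub2 : (S a : H) - (S b : H) = S ⟨(a : H) - (b : H), sub_mem a.2 b.2⟩ := by
        rw [← S.map_sub]; congr 1
      rw [dist_eq_norm, dist_eq_norm, hsub, hsub2]
      have hb := normBound hq hw (sub_mem a.2 b.2) (sub_mem (hSA a) (hSA b))
      rw [Real.sqrt_inv]
      have hq' : Real.sqrt q ≠ 0 := ne_of_gt (Real.sqrt_pos.2 hq)
      calc ‖(S.adjoint ⟨(a : H) - (b : H), sub_mem (hSA a) (hSA b)⟩ : H)‖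
          = (Real.sqrt q)⁻¹ * (Real.sqrt q * ‖(S.adjoint ⟨(a : H) - (b : H),
              sub_mem (hSA a) (hSA b)⟩ : H)‖) := by field_simp
        _ ≤ (Real.sqrt q)⁻¹ * ‖(S ⟨(a : H) - (b : H), sub_mem a.2 b.2⟩ : H)‖ :=
            mul_le_mul_of_nonneg_left hb (by positivity)
    calc dist (w m) (w n) ≤ Real.sqrt q⁻¹ * dist (S (v m) : H) (S (v n) : H) := key (v m) (v n)
      _ < Real.sqrt q⁻¹ * (Real.sqrt q * ε) := by
          apply mul_lt_mul_of_pos_left (hN m hm n hn) (by positivity)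
      _ = ε := by
          rw [Real.sqrt_inv, ← mul_assoc, inv_mul_cancel₀ (ne_of_gt (Real.sqrt_pos.2 hq)),
            one_mul]
  obtain ⟨wl, hwl⟩ := cauchySeq_tendsto_of_complete hwC
  -- wl = S.adjoint x
  have hAx : (S.adjoint ⟨x, hx'⟩ : H) = wl := by
    apply hdense.eq_of_inner_left (𝕜 := ℂ)
    intro z0 hz0
    obtain ⟨z, rfl⟩ : ∃ z : S.domain, (z : H) = z0 := ⟨⟨z0, hz0⟩, rfl⟩
    have h1 : ⟪(S.adjoint ⟨x, hx'⟩ : H), (z : H)⟫ = ⟪x, (S z : H)⟫ :=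
      (S.adjoint_isFormalAdjoint hdense) ⟨x, hx'⟩ z
    have h2 : ∀ k, ⟪w k, (z : H)⟫ = ⟪((v k : H)), (S z : H)⟫ := fun k =>
      (S.adjoint_isFormalAdjoint hdense) ⟨(v k : H), hSA (v k)⟩ z
    have t1 : Filter.Tendsto (fun k => ⟪w k, (z : H)⟫) Filter.atTop (nhds ⟪wl, (z : H)⟫) :=
      Filter.Tendsto.inner hwl tendsto_const_nhds
    have t2 : Filter.Tendsto (fun k => ⟪((v k : H)), (S z : H)⟫) Filter.atTop
        (nhds ⟪x, (S z : H)⟫) := Filter.Tendsto.inner hv1 tendsto_const_nhds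
    rw [h1, ← tendsto_nhds_unique (t1.congr h2) t2]
  -- pass to the limit in the relation
  have hrel : ∀ k, ⟪(S ⟨u, hu⟩ : H), (S (v k) : H)⟫
      = ⟪u, ((v k : H))⟫ + (q : ℂ) * ⟪(S.adjoint ⟨u, hu'⟩ : H), w k⟫ := by
    intro k
    have := hw u (v k) hu hu' (v k).2 (hSA (v k))
    rw [← this]; ring
  have t1 : Filter.Tendsto (fun k => ⟪(S ⟨u, hu⟩ : H), (S (v k) : H)⟫) Filter.atTop
      (nhds ⟪(S ⟨u, hu⟩ : H), (S.closure ⟨x, hx⟩ : H)⟫) :=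
    Filter.Tendsto.inner tendsto_const_nhds hv2
  have t2 : Filter.Tendsto
      (fun k => ⟪u, ((v k : H))⟫ + (q : ℂ) * ⟪(S.adjoint ⟨u, hu'⟩ : H), w k⟫) Filter.atTop
      (nhds (⟪u, x⟫ + (q : ℂ) * ⟪(S.adjoint ⟨u, hu'⟩ : H), wl⟫)) :=
    (Filter.Tendsto.inner tendsto_const_nhds hv1).add
      (tendsto_const_nhds.mul (Filter.Tendsto.inner tendsto_const_nhds hwl))
  rw [hAx]
  exact tendsto_nhds_unique (t1.congr hrel) t2

theorem qNum_zero (q : ℝ) : qNum q 0 = 0 := by simp [qNum]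

theorem qNum_succ (q : ℝ) (n : ℕ) : qNum q (n + 1) = 1 + q * qNum q n := by
  unfold qNum
  split_ifs with h
  · subst h; push_cast; ring
  · have h1 : 1 - q ≠ 0 := sub_ne_zero.2 (Ne.symm h)
    field_simp
    ring

theorem stepLemma {q : ℝ} (hq : 0 < q) {S : H →ₗ.[ℂ] H} (hdense : Dense (S.domain : Set H))
    (hclos : S.IsClosable) (hw : SatOqW q S)
    (hdomeq : S.closure.domain = S.adjoint.domain)
    (n : ℕ) (x y : H) (hx : x ∈ S.closure.domain) (hy : y ∈ S.closure.domain)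
    (hAy : ∀ h : y ∈ S.adjoint.domain, S.adjoint ⟨y, h⟩ = ((qNum q n : ℝ) : ℂ) • x)
    (halt : (n = 0 ∧ x = 0) ∨ (∀ h1 : x ∈ S.closure.domain, y = S.closure ⟨x, h1⟩)) :
    (S.closure ⟨y, hy⟩ : H) ∈ S.adjoint.domain ∧
    ∀ h : (S.closure ⟨y, hy⟩ : H) ∈ S.adjoint.domain,
      S.adjoint ⟨(S.closure ⟨y, hy⟩ : H), h⟩ = ((qNum q (n + 1) : ℝ) : ℂ) • y := by
  have hSA : ∀ {u : H}, u ∈ S.domain → u ∈ S.adjoint.domain := fun hu =>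
    hdomeq ▸ (S.le_closure.1 hu)
  have hy' : y ∈ S.adjoint.domain := hdomeq ▸ hy
  have key : ∀ (u : H) (hu : u ∈ S.domain),
      ⟪(S ⟨u, hu⟩ : H), (S.closure ⟨y, hy⟩ : H)⟫ = ((qNum q (n + 1) : ℝ) : ℂ) * ⟪u, y⟫ := by
    intro u hu
    have hu' : u ∈ S.adjoint.domain := hSA hu
    have hB := factB hq hdense hclos hw hdomeq hu hu' hy hy'
    rw [hAy hy', inner_smul_right] at hB
    rcases halt with ⟨hn0, hx0⟩ | hT
    · subst hn0
      rw [hx0, inner_zero_right] at hB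
      rw [hB, qNum_succ, qNum_zero]
      push_cast; ring
    · have hFA := factA S hdense hclos hu' hx
      have hxy : ⟪(S.adjoint ⟨u, hu'⟩ : H), x⟫ = ⟪u, y⟫ := by
        rw [hT hx]; exact hFA.symm
      rw [hxy] at hB
      rw [hB, qNum_succ]
      push_cast; ring
  have inner_eq : ∀ xx : S.domain,
      ⟪(((qNum q (n + 1) : ℝ) : ℂ) • y), (xx : H)⟫
        = ⟪(S.closure ⟨y, hy⟩ : H), (S (xx) : H)⟫ := by
    intro xx
    calc ⟪(((qNum q (n + 1) : ℝ) : ℂ) • y), (xx : H)⟫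
        = (starRingEnd ℂ) ((qNum q (n + 1) : ℝ) : ℂ) * ⟪y, (xx : H)⟫ := inner_smul_left _ _ _
      _ = (starRingEnd ℂ) (((qNum q (n + 1) : ℝ) : ℂ) * ⟪(xx : H), y⟫) := by
          rw [map_mul, inner_conj_symm]
      _ = (starRingEnd ℂ) ⟪(S xx : H), (S.closure ⟨y, hy⟩ : H)⟫ := by rw [key xx xx.2]
      _ = ⟪(S.closure ⟨y, hy⟩ : H), (S xx : H)⟫ := inner_conj_symm _ _
  have hz : (S.closure ⟨y, hy⟩ : H) ∈ S.adjoint.domain :=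
    LinearPMap.mem_adjoint_domain_of_exists _
      ⟨((qNum q (n + 1) : ℝ) : ℂ) • y, inner_eq⟩
  exact ⟨hz, fun h => LinearPMap.adjoint_apply_eq hdense ⟨_, h⟩ inner_eq⟩

/-- Let `q > 0` and let `S` be densely defined and closable, satisfying
`(O_{q,w})` with `dom S̄ = dom S*`. Then for every `f ∈ ker S*` the iterates
`g n = S̄ⁿ f` are well defined, lie in `dom S̄ ∩ dom S*`, satisfy
`S* S̄ⁿ⁺¹ f = [n+1]_q S̄ⁿ f` (and `S* f = 0`), and `⟨S̄^m f, S̄^n f⟩ = 0` for `m ≠ n`. -/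
theorem stmt11 (q : ℝ) (hq : 0 < q) (S : H →ₗ.[ℂ] H)
    (hdense : Dense (S.domain : Set H)) (hclos : S.IsClosable)
    (hw : SatOqW q S) (hdomeq : S.closure.domain = S.adjoint.domain) :
    ∀ (f : H) (hf : f ∈ S.adjoint.domain), S.adjoint ⟨f, hf⟩ = 0 →
      ∃ (g : ℕ → H) (memC : ∀ n, g n ∈ S.closure.domain)
        (memA : ∀ n, g n ∈ S.adjoint.domain),
        g 0 = f ∧
        (∀ n, g (n + 1) = S.closure ⟨g n, memC n⟩) ∧
        (∀ n, S.adjoint ⟨g (n + 1), memA (n + 1)⟩ = ((qNum q (n + 1) : ℝ) : ℂ) • g n) ∧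
        (∀ m n, m ≠ n → (inner ℂ (g m) (g n) : ℂ) = 0) := by
  intro f hf hf0
  set Inv : ℕ → H × H → Prop := fun n p =>
    p.1 ∈ S.closure.domain ∧ p.2 ∈ S.closure.domain ∧
      (∀ h : p.2 ∈ S.adjoint.domain, S.adjoint ⟨p.2, h⟩ = ((qNum q n : ℝ) : ℂ) • p.1) ∧
      ((n = 0 ∧ p.1 = 0) ∨ (∀ h1 : p.1 ∈ S.closure.domain, p.2 = S.closure ⟨p.1, h1⟩))
    with hInv
  have hmemiff : ∀ z : H, z ∈ S.closure.domain ↔ z ∈ S.adjoint.domain := fun z => by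
    rw [hdomeq]
  have base : Inv 0 (0, f) := by
    refine ⟨Submodule.zero_mem _, (hmemiff f).2 hf, fun h => ?_, Or.inl ⟨rfl, rfl⟩⟩
    rw [smul_zero]
    exact hf0
  have step : ∀ n (p : H × H) (hp : Inv n p),
      Inv (n + 1) (p.2, S.closure ⟨p.2, hp.2.1⟩) := by
    intro n p hp
    obtain ⟨hsl, -⟩ := stepLemma hq hdense hclos hw hdomeq n p.1 p.2 hp.1 hp.2.1
      hp.2.2.1 hp.2.2.2
    exact ⟨hp.2.1, (hmemiff _).2 hsl,
      (stepLemma hq hdense hclos hw hdomeq n p.1 p.2 hp.1 hp.2.1 hp.2.2.1 hp.2.2.2).2,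
      Or.inr fun h1 => rfl⟩
  let G : ∀ n : ℕ, {p : H × H // Inv n p} := fun n =>
    Nat.rec ⟨(0, f), base⟩ (fun n ih => ⟨(ih.1.2, S.closure ⟨ih.1.2, ih.2.2.1⟩),
      step n ih.1 ih.2⟩) n
  have hGsucc : ∀ n, (G (n + 1) : {p : H × H // Inv (n + 1) p}).1
      = ((G n).1.2, S.closure ⟨(G n).1.2, (G n).2.2.1⟩) := fun n => rfl
  refine ⟨fun n => (G n).1.2, fun n => (G n).2.2.1, fun n => (hmemiff _).1 (G n).2.2.1,
    rfl, fun n => rfl, fun n => ?_, ?_⟩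
  · have := (G (n + 1)).2.2.2.1 ((hmemiff _).1 (G (n + 1)).2.2.1)
    exact this
  · -- orthogonality
    have memA : ∀ n, (G n).1.2 ∈ S.adjoint.domain := fun n => (hmemiff _).1 (G n).2.2.1
    have key : ∀ m k : ℕ, (inner ℂ ((G m).1.2) ((G (m + k + 1)).1.2) : ℂ) = 0 := by
      intro m
      induction m with
      | zero =>
        intro k
        rw [show 0 + k + 1 = k + 1 from by omega]
        show (inner ℂ f (S.closure ⟨(G k).1.2, (G k).2.2.1⟩ : H) : ℂ) = 0
        rw [factA S hdense hclos hf (G k).2.2.1, hf0, inner_zero_left]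
      | succ m ih =>
        intro k
        have hidx : m + 1 + k + 1 = (m + k + 1) + 1 := by omega
        rw [hidx]
        show (inner ℂ ((G (m + 1)).1.2)
          (S.closure ⟨(G (m + k + 1)).1.2, (G (m + k + 1)).2.2.1⟩ : H) : ℂ) = 0
        rw [factA S hdense hclos (memA (m + 1)) (G (m + k + 1)).2.2.1]
        rw [(G (m + 1)).2.2.2.1 (memA (m + 1))]
        rw [inner_smul_left, ih k, mul_zero]
    intro m n hmn
    rcases lt_or_gt_of_ne hmn with h | h
    · have : m + (n - m - 1) + 1 = n := by omega
      rw [← this]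
      exact key m (n - m - 1)
    · have : n + (m - n - 1) + 1 = m := by omega
      rw [← inner_conj_symm, ← this, key n (m - n - 1), map_zero]
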